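/- arXiv:2302.06005 — 6 statements merged into one kernel-verified Lean document; each statement's English description precedes it below -/
import Mathlib

section
/- Let (Ω,ρ) be a totally bounded metric space with 0 < diam(Ω) < ∞, and let γ > 0. Then there exist a point x₀ ∈ Ω and a finite subset K ⊆ Ω such that: (i) ρ(x₀,x) ≥ diam(Ω)/4 for every x ∈ K; (ii) ρ(x,y) ≥ γ for all distinct x,y ∈ K; and (iii) |K| = ⌊N_Ω(γ)/2⌋. -/
open MeasureTheory Set Metric
open scoped ENNReal NNReal

noncomputable section

/-- The `β`-hslope of `f` at `x`: `Λ_f^β(x) = sup_{y ≠ x} |f x - f y| / ρ(x,y)^β`. -/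
def hslope {Ω : Type*} [MetricSpace Ω] (β : ℝ) (f : Ω → ℝ) (x : Ω) : ℝ≥0∞ :=
  ⨆ (y : Ω) (_ : y ≠ x), ENNReal.ofReal (|f x - f y| / dist x y ^ β)

/-- The average `β`-hslope of `f` with respect to `μ`: `E_{X∼μ}[Λ_f^β(X)]`. -/
def avgSlope {Ω : Type*} [MetricSpace Ω] [MeasurableSpace Ω] (μ : Measure Ω) (β : ℝ)
    (f : Ω → ℝ) : ℝ≥0∞ :=
  ∫⁻ x, hslope β f x ∂μ

/-- The weak average `β`-hslope of `f` with respect to `μ`: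
`sup_{t>0} t · μ {x : Λ_f^β(x) ≥ t}`. -/
def weakAvgSlope {Ω : Type*} [MetricSpace Ω] [MeasurableSpace Ω] (μ : Measure Ω) (β : ℝ)
    (f : Ω → ℝ) : ℝ≥0∞ :=
  ⨆ (t : ℝ) (_ : 0 < t), ENNReal.ofReal t * μ {x | ENNReal.ofReal t ≤ hslope β f x}

/-- The class `H̄öl^β_L(Ω,μ)` of measurable `[0,1]`-valued functions with average
`β`-hslope at most `L`. -/
def avgHolderClass {Ω : Type*} [MetricSpace Ω] [MeasurableSpace Ω] (μ : Measure Ω)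
    (β L : ℝ) : Set (Ω → ℝ) :=
  {f | Measurable f ∧ (∀ x, f x ∈ Icc (0:ℝ) 1) ∧ avgSlope μ β f ≤ ENNReal.ofReal L}

/-- The class `H̃öl^β_L(Ω,μ)` of measurable `[0,1]`-valued functions with weak average
`β`-hslope at most `L`. -/
def weakHolderClass {Ω : Type*} [MetricSpace Ω] [MeasurableSpace Ω] (μ : Measure Ω)
    (β L : ℝ) : Set (Ω → ℝ) :=
  {f | Measurable f ∧ (∀ x, f x ∈ Icc (0:ℝ) 1) ∧ weakAvgSlope μ β f ≤ ENNReal.ofReal L}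

/-- The covering number `N_Ω(t)`: minimal cardinality of a set of points whose closed
`t`-balls cover `Ω` (`∞` if no finite cover exists). -/
def coveringNumber (Ω : Type*) [MetricSpace Ω] (t : ℝ) : ℝ≥0∞ :=
  ⨅ (A : Finset Ω) (_ : ∀ x : Ω, ∃ a ∈ A, dist x a ≤ t), (A.card : ℝ≥0∞)

/-- `B` is a finite set of `ε`-brackets (with respect to `L1(μ)`) covering `F`. -/
def IsBracketing {Ω : Type*} [MeasurableSpace Ω] (μ : Measure Ω) (F : Set (Ω → ℝ))
    (ε : ℝ) (B : Finset ((Ω → ℝ) × (Ω → ℝ))) : Prop :=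
  (∀ lu ∈ B, (∀ x, lu.1 x ∈ Icc (0:ℝ) 1 ∧ lu.2 x ∈ Icc (0:ℝ) 1) ∧
      ∫⁻ x, ENNReal.ofReal |lu.2 x - lu.1 x| ∂μ ≤ ENNReal.ofReal ε) ∧
    ∀ f ∈ F, ∃ lu ∈ B, ∀ x, lu.1 x ≤ f x ∧ f x ≤ lu.2 x

/-- The bracketing number `N_[](F, L1(μ), ε)`. -/
def bracketingNumber {Ω : Type*} [MetricSpace Ω] [MeasurableSpace Ω] (F : Set (Ω → ℝ))
    (μ : Measure Ω) (ε : ℝ) : ℝ≥0∞ :=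
  ⨅ (B : Finset ((Ω → ℝ) × (Ω → ℝ))) (_ : IsBracketing μ F ε B), (B.card : ℝ≥0∞)

/-- Logarithm of an extended-real cardinality: equals `log N` for finite natural `N`
and `∞` when `N = ∞`. -/
def elog (N : ℝ≥0∞) : ℝ≥0∞ :=
  ⨅ (m : ℕ) (_ : N ≤ (m : ℝ≥0∞)), ENNReal.ofReal (Real.log m)

/-- The `L1` risk `L_D(f) = E_{(X,Y)∼D} |f(X) − Y|`. -/
def risk {Ω : Type*} [MetricSpace Ω] [MeasurableSpace Ω] (D : Measure (Ω × ℝ))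
    (f : Ω → ℝ) : ℝ≥0∞ :=
  ∫⁻ p, ENNReal.ofReal |f p.1 - p.2| ∂D

/-- The empirical `L1` risk `L_S(f) = (1/n) Σ_i |f(X_i) − Y_i|`. -/
def empRisk {Ω : Type*} [MetricSpace Ω] {n : ℕ} (S : Fin n → Ω × ℝ) (f : Ω → ℝ) : ℝ :=
  (n : ℝ)⁻¹ * ∑ i, |f (S i).1 - (S i).2|

/-- `D` is realizable by the class `F`. -/
def Realizable {Ω : Type*} [MetricSpace Ω] [MeasurableSpace Ω] (D : Measure (Ω × ℝ))
    (F : Set (Ω → ℝ)) : Prop :=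
  ∃ f ∈ F, risk D f = 0

/-- The empirical average `β`-hslope of `f` over the sample points `X_1,…,X_n`. -/
def empAvgSlope {Ω : Type*} [MetricSpace Ω] (β : ℝ) {n : ℕ} (X : Fin n → Ω)
    (f : Ω → ℝ) : ℝ :=
  (n : ℝ)⁻¹ * ∑ i, ⨆ (j : Fin n) (_ : X j ≠ X i), |f (X i) - f (X j)| / dist (X i) (X j) ^ β


/-- Lemma: every totally bounded metric space of positive diameter
contains a large well-separated set far from some point. -/
theorem isolated_point_and_packing
    {Ω : Type*} [MetricSpace Ω]
    (htb : TotallyBounded (Set.univ : Set Ω))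
    (hbd : Bornology.IsBounded (Set.univ : Set Ω))
    (hdiam : 0 < Metric.diam (Set.univ : Set Ω))
    (γ : ℝ) (hγ : 0 < γ) :
    ∃ (x₀ : Ω) (K : Finset Ω),
      (∀ x ∈ K, dist x₀ x ≥ Metric.diam (Set.univ : Set Ω) / 4) ∧
      (∀ x ∈ K, ∀ y ∈ K, x ≠ y → dist x y ≥ γ) ∧
      ∃ N : ℕ, coveringNumber Ω γ = (N : ℝ≥0∞) ∧ K.card = N / 2 := by
  classical
  set D := Metric.diam (Set.univ : Set Ω) with hD
  -- obtain two points at distance > D/2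
  have hab : ∃ a b : Ω, D / 2 < dist a b := by
    by_contra h
    push_neg at h
    have : D ≤ D / 2 :=
      Metric.diam_le_of_forall_dist_le (by linarith) (fun x _ y _ => h x y)
    linarith
  obtain ⟨a, b, hab⟩ := hab
  -- finite covers at every scale
  have hcov : ∀ ε : ℝ, 0 < ε → ∃ C : Finset Ω, ∀ x : Ω, ∃ c ∈ C, dist x c ≤ ε := by
    intro ε hε
    obtain ⟨t, htf, hts⟩ := (Metric.totallyBounded_iff.mp htb) ε hε
    refine ⟨htf.toFinset, fun x => ?_⟩
    obtain ⟨c, hc, hxc⟩ := Set.mem_iUnion₂.mp (hts (Set.mem_univ x))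
    exact ⟨c, htf.mem_toFinset.mpr hc, le_of_lt hxc⟩
  -- the set of cardinalities of γ-covers
  set Cov : Finset Ω → Prop := fun A => ∀ x : Ω, ∃ c ∈ A, dist x c ≤ γ with hCov
  have hSne : ∃ n, ∃ A : Finset Ω, Cov A ∧ A.card = n := by
    obtain ⟨C, hC⟩ := hcov γ hγ
    exact ⟨C.card, C, hC, rfl⟩
  set N : ℕ := sInf {n | ∃ A : Finset Ω, Cov A ∧ A.card = n} with hNdef
  obtain ⟨A₀, hA₀cov, hA₀card⟩ := Nat.sInf_mem hSne
  have hcovN : coveringNumber Ω γ = (N : ℝ≥0∞) := by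
    apply le_antisymm
    · have h1 : coveringNumber Ω γ ≤ (A₀.card : ℝ≥0∞) := iInf₂_le A₀ hA₀cov
      rw [hNdef]
      rwa [hA₀card] at h1
    · refine le_iInf₂ fun A hA => Nat.cast_le.mpr (Nat.sInf_le ?_)
      exact ⟨A, hA, rfl⟩
  -- γ-separated finsets have bounded cardinality
  set Sep : Finset Ω → Prop := fun S => ∀ x ∈ S, ∀ y ∈ S, x ≠ y → γ ≤ dist x y with hSep
  obtain ⟨C, hC⟩ := hcov (γ / 3) (by linarith)
  have hbound : ∀ S : Finset Ω, Sep S → S.card ≤ C.card := by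
    intro S hS
    choose f hf1 hf2 using hC
    apply Finset.card_le_card_of_injOn f (fun x _ => hf1 x)
    intro x hx y hy hxy
    by_contra hne
    have := hS x hx y hy hne
    have h1 := hf2 x
    have h2 := hf2 y
    have : dist x y ≤ dist x (f x) + dist (f y) y := by
      rw [hxy]; exact dist_triangle x (f y) y
    rw [dist_comm (f y) y] at this
    linarith
  -- take a γ-separated set of maximal cardinality
  have hTbdd : BddAbove {n | ∃ S : Finset Ω, Sep S ∧ S.card = n} := by
    refine ⟨C.card, fun n hn => ?_⟩
    obtain ⟨S, hS, rfl⟩ := hn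
    exact hbound S hS
  have hTne : {n | ∃ S : Finset Ω, Sep S ∧ S.card = n}.Nonempty :=
    ⟨0, ∅, fun x hx => absurd hx (Finset.notMem_empty x), rfl⟩
  obtain ⟨P, hPsep, hPcard⟩ := Nat.sSup_mem hTne hTbdd
  -- P is a γ-cover, by maximality
  have hPcov : Cov P := by
    intro x
    by_contra hx
    push_neg at hx
    have hxP : x ∉ P := fun hxP => by
      have := hx x hxP
      simp only [dist_self] at this
      linarith
    have hsep' : Sep (insert x P) := by
      intro u hu v hv huv
      rcases Finset.mem_insert.mp hu with h1 | hu'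
      · rcases Finset.mem_insert.mp hv with h2 | hv'
        · exact absurd (h1.trans h2.symm) huv
        · rw [h1]; exact le_of_lt (hx v hv')
      · rcases Finset.mem_insert.mp hv with h2 | hv'
        · rw [h2, dist_comm]; exact le_of_lt (hx u hu')
        · exact hPsep u hu' v hv' huv
    have hle : (insert x P).card ≤ sSup {n | ∃ S : Finset Ω, Sep S ∧ S.card = n} :=
      le_csSup hTbdd ⟨insert x P, hsep', rfl⟩
    rw [Finset.card_insert_of_notMem hxP, hPcard] at hle
    omega
  -- hence N ≤ |P|
  have hNP : N ≤ P.card := Nat.sInf_le ⟨P, hPcov, rfl⟩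
  -- split P according to distance from a and b
  set Pa : Finset Ω := P.filter (fun x => D / 4 ≤ dist a x) with hPa
  set Pb : Finset Ω := P.filter (fun x => D / 4 ≤ dist b x) with hPb
  have hsplit : P ⊆ Pa ∪ Pb := by
    intro x hx
    have htri : dist a b ≤ dist a x + dist b x := by
      rw [dist_comm b x]; exact dist_triangle a x b
    rcases le_or_gt (D / 4) (dist a x) with h | h
    · exact Finset.mem_union_left _ (Finset.mem_filter.mpr ⟨hx, h⟩)
    · refine Finset.mem_union_right _ (Finset.mem_filter.mpr ⟨hx, ?_⟩)
      linarith
  have hcards : P.card ≤ Pa.card + Pb.card :=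
    le_trans (Finset.card_le_card hsplit) (Finset.card_union_le _ _)
  -- one of the two halves has at least ⌊N/2⌋ elements
  have hhalf : N / 2 ≤ Pa.card ∨ N / 2 ≤ Pb.card := by omega
  have key : ∀ (x₀ : Ω) (Q : Finset Ω), Q ⊆ P → (∀ x ∈ Q, D / 4 ≤ dist x₀ x) →
      N / 2 ≤ Q.card →
      ∃ (x₀ : Ω) (K : Finset Ω),
        (∀ x ∈ K, dist x₀ x ≥ D / 4) ∧
        (∀ x ∈ K, ∀ y ∈ K, x ≠ y → dist x y ≥ γ) ∧
        ∃ N' : ℕ, coveringNumber Ω γ = (N' : ℝ≥0∞) ∧ K.card = N' / 2 := by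
    intro x₀ Q hQP hQfar hQcard
    obtain ⟨K, hKQ, hKcard⟩ := Finset.exists_subset_card_eq hQcard
    refine ⟨x₀, K, fun x hx => hQfar x (hKQ hx), ?_, N, hcovN, hKcard⟩
    intro x hx y hy hxy
    exact hPsep x (hQP (hKQ hx)) y (hQP (hKQ hy)) hxy
  rcases hhalf with h | h
  · exact key a Pa (Finset.filter_subset _ _)
      (fun x hx => (Finset.mem_filter.mp hx).2) h
  · exact key b Pb (Finset.filter_subset _ _)
      (fun x hx => (Finset.mem_filter.mp hx).2) h

end
end

section
/- Let β ∈ (0,1), let Ω = [0,1] with the standard metric, let μ be the probability measure on [0,1] with density proportional to |x − 1/2|^{β−1} with respect to Lebesgue measure, and let f(x) = 1[x > 1/2]. Then: (i) Λ̃_f^β(μ) < ∞ (f is weakly-average-β-Hölder with respect to μ); (ii) Λ̄_f^β(μ) = ∞ (f is not strongly-average-β-Hölder with any finite modulus); and (iii) Λ̃_f^1(μ) = ∞ (f is not weakly-average-Lipschitz with any finite modulus). -/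
open MeasureTheory Set Metric
open scoped ENNReal NNReal

noncomputable section

/-!
Off the jump, the `β`-slope of the step `1[x > c]` at `x` is `|x - c|^{-β}`. Hence the level set
`{Λ ≥ t}` is the interval `|x - c| ≤ t^{-1/β}`, whose mass under the density `|x - c|^{β-1}` is
`O(t⁻¹)`, so the weak average slope is finite. The same density turns the slope integrand into
`(x - c)⁻¹` on the right of `c`, which is not integrable. For the Lipschitz slope the level set
`{Λ ≥ t}` contains `(c, c + t⁻¹]`, of mass `t^{-β}/β`, and `t · t^{-β} → ∞` because `β < 1`.
-/

open Filter

section Scaling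

variable {Ω : Type*} [MetricSpace Ω] [MeasurableSpace Ω]

lemma avgSlope_smul (c : ℝ≥0∞) (μ : Measure Ω) (β : ℝ) (f : Ω → ℝ) :
    avgSlope (c • μ) β f = c * avgSlope μ β f :=
  lintegral_smul_measure c _

lemma weakAvgSlope_smul (c : ℝ≥0∞) (μ : Measure Ω) (β : ℝ) (f : Ω → ℝ) :
    weakAvgSlope (c • μ) β f = c * weakAvgSlope μ β f := by
  simp only [weakAvgSlope, Measure.smul_apply, smul_eq_mul, ENNReal.mul_iSup, mul_left_comm c]

end Scaling

section Step

variable {s : Set ℝ} {a γ : ℝ} {f : s → ℝ}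

lemma hslope_step_le (hγ : 0 ≤ γ) (hf : ∀ z, f z = if a < (z : ℝ) then 1 else 0) {x : s}
    (hx : (x : ℝ) ≠ a) : hslope γ f x ≤ ENNReal.ofReal (|(x : ℝ) - a| ^ (-γ)) := by
  have hxa : 0 < |(x : ℝ) - a| := abs_pos.2 (sub_ne_zero.2 hx)
  refine iSup₂_le fun y _ => ENNReal.ofReal_le_ofReal ?_
  by_cases hxy : f x = f y
  · rw [hxy, sub_self, abs_zero, zero_div]
    positivity
  have hsep : |f x - f y| = 1 ∧ |(x : ℝ) - a| ≤ dist x y := by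
    rw [Subtype.dist_eq, Real.dist_eq]
    rw [hf, hf] at hxy ⊢
    split_ifs at hxy ⊢ with h₁ h₂ h₂
    · exact absurd rfl hxy
    · exact ⟨by norm_num, abs_le_abs (by linarith) (by linarith)⟩
    · refine ⟨by norm_num, ?_⟩
      rw [abs_sub_comm, abs_sub_comm (x : ℝ)]
      exact abs_le_abs (by linarith) (by linarith)
    · exact absurd rfl hxy
  rw [hsep.1, Real.rpow_neg hxa.le, one_div]
  exact inv_anti₀ (by positivity) (Real.rpow_le_rpow hxa.le hsep.2 hγ)

lemma le_hslope_step (ha : a ∈ s) (hf : ∀ z, f z = if a < (z : ℝ) then 1 else 0) {x : s}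
    (hx : a < x) : ENNReal.ofReal (((x : ℝ) - a) ^ (-γ)) ≤ hslope γ f x := by
  have hne : (⟨a, ha⟩ : s) ≠ x := fun h => hx.ne (congrArg Subtype.val h)
  refine le_of_eq_of_le ?_ (le_iSup₂ (f := fun y (_ : y ≠ x) =>
    ENNReal.ofReal (|f x - f y| / dist x y ^ γ)) _ hne)
  rw [hf, hf, if_pos hx, if_neg (lt_irrefl a), Subtype.dist_eq, Real.dist_eq,
    abs_of_pos (sub_pos.2 hx), Real.rpow_neg (sub_pos.2 hx).le]
  norm_num

end Step

section PowerIntegrals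

variable (c : ℝ) {β δ : ℝ}

lemma lintegral_Ioc_rpow_sub (hβ : 0 < β) (hδ : 0 ≤ δ) :
    ∫⁻ z in Ioc c (c + δ), ENNReal.ofReal ((z - c) ^ (β - 1)) =
      ENNReal.ofReal (δ ^ β / β) := by
  have hint : IntervalIntegrable (fun z => (z - c) ^ (β - 1)) volume c (c + δ) := by
    simpa [add_comm] using (intervalIntegral.intervalIntegrable_rpow' (r := β - 1)
      (by linarith) (a := 0) (b := δ)).comp_sub_right c
  rw [← ofReal_integral_eq_lintegral_ofReal
      ((intervalIntegrable_iff_integrableOn_Ioc_of_le (by linarith)).1 hint)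
      (ae_restrict_of_forall_mem measurableSet_Ioc fun z hz =>
        Real.rpow_nonneg (sub_pos.2 hz.1).le _),
    ← intervalIntegral.integral_of_le (by linarith),
    intervalIntegral.integral_comp_sub_right (· ^ (β - 1)),
    sub_self, add_sub_cancel_left, integral_rpow (Or.inl (by linarith)), sub_add_cancel,
    Real.zero_rpow hβ.ne', sub_zero]

lemma lintegral_Ioc_sub_rpow (hβ : 0 < β) (hδ : 0 ≤ δ) :
    ∫⁻ z in Ioc (c - δ) c, ENNReal.ofReal ((c - z) ^ (β - 1)) =
      ENNReal.ofReal (δ ^ β / β) := by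
  have hint : IntervalIntegrable (fun z => (c - z) ^ (β - 1)) volume (c - δ) c := by
    simpa using (intervalIntegral.intervalIntegrable_rpow' (r := β - 1)
      (by linarith) (a := 0) (b := δ)).comp_sub_left c |>.symm
  rw [← ofReal_integral_eq_lintegral_ofReal
      ((intervalIntegrable_iff_integrableOn_Ioc_of_le (by linarith)).1 hint)
      (ae_restrict_of_forall_mem measurableSet_Ioc fun z hz =>
        Real.rpow_nonneg (sub_nonneg.2 hz.2) _),
    ← intervalIntegral.integral_of_le (by linarith),
    intervalIntegral.integral_comp_sub_left (· ^ (β - 1)),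
    sub_self, sub_sub_cancel, integral_rpow (Or.inl (by linarith)), sub_add_cancel,
    Real.zero_rpow hβ.ne', sub_zero]

lemma lintegral_Icc_abs_rpow_sub_le (hβ : 0 < β) (hδ : 0 ≤ δ) :
    ∫⁻ z in Icc (c - δ) (c + δ), ENNReal.ofReal (|z - c| ^ (β - 1)) ≤
      ENNReal.ofReal (2 * (δ ^ β / β)) := by
  rw [← Icc_union_Ioc_eq_Icc (b := c) (by linarith) (by linarith)]
  refine (lintegral_union_le _ _ _).trans_eq ?_
  rw [← Measure.restrict_congr_set Ioc_ae_eq_Icc, two_mul,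
    ENNReal.ofReal_add (by positivity) (by positivity)]
  congr 1
  · rw [← lintegral_Ioc_sub_rpow c hβ hδ]
    refine setLIntegral_congr_fun measurableSet_Ioc fun z hz => ?_
    rw [abs_sub_comm, abs_of_nonneg (sub_nonneg.2 hz.2)]
  · rw [← lintegral_Ioc_rpow_sub c hβ hδ]
    refine setLIntegral_congr_fun measurableSet_Ioc fun z hz => ?_
    rw [abs_of_pos (sub_pos.2 hz.1)]

lemma lintegral_Ioc_inv_sub_eq_top (hδ : 0 < δ) :
    ∫⁻ z in Ioc c (c + δ), ENNReal.ofReal ((z - c)⁻¹) = ⊤ := by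
  by_contra h
  have hint : IntegrableOn (fun z => (z - c)⁻¹) (Ioc c (c + δ)) :=
    (lintegral_ofReal_ne_top_iff_integrable (by fun_prop)
      (ae_restrict_of_forall_mem measurableSet_Ioc fun z hz =>
        inv_nonneg.2 (sub_pos.2 hz.1).le)).1 h
  have := intervalIntegrable_sub_inv_iff.1
    ((intervalIntegrable_iff_integrableOn_Ioc_of_le (by linarith)).2 hint)
  simp [hδ.ne', Set.left_mem_uIcc] at this

end PowerIntegrals

lemma setLIntegral_preimage_comap_withDensity {α : Type*} [MeasurableSpace α] {μ : Measure α}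
    {s t : Set α} (hs : MeasurableSet s) (ht : MeasurableSet t) {g h : α → ℝ≥0∞}
    (hg : Measurable g) (hh : Measurable h) :
    ∫⁻ x in (↑) ⁻¹' t, h x
        ∂(μ.comap (Subtype.val : s → α)).withDensity (fun x => g x) =
      ∫⁻ z in s ∩ t, g z * h z ∂μ := by
  calc _ = ∫⁻ x in (↑) ⁻¹' t, g x * h x ∂(μ.comap (Subtype.val : s → α)) :=
        setLIntegral_withDensity_eq_setLIntegral_mul _ (hg.comp measurable_subtype_coe)
          (hh.comp measurable_subtype_coe) (measurable_subtype_coe ht)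
    _ = _ := by
      rw [setLIntegral_subtype hs _ (fun z => g z * h z), Subtype.image_preimage_coe]

def powerMeasure (s : Set ℝ) (c β : ℝ) : Measure s :=
  ((volume : Measure ℝ).comap Subtype.val).withDensity
    fun z => ENNReal.ofReal (|(z : ℝ) - c| ^ (β - 1))

section PowerMeasure

variable {s : Set ℝ} {c β δ : ℝ}

lemma powerMeasure_preimage (hs : MeasurableSet s) {t : Set ℝ} (ht : MeasurableSet t) :
    powerMeasure s c β ((↑) ⁻¹' t) =
      ∫⁻ z in s ∩ t, ENNReal.ofReal (|z - c| ^ (β - 1)) := by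
  unfold powerMeasure
  simpa using setLIntegral_preimage_comap_withDensity (μ := volume) hs ht (by fun_prop)
    measurable_const (g := fun z => ENNReal.ofReal (|z - c| ^ (β - 1))) (h := 1)

lemma powerMeasure_preimage_Icc_le (hs : MeasurableSet s) (hβ : 0 < β) (hδ : 0 ≤ δ) :
    powerMeasure s c β ((↑) ⁻¹' Icc (c - δ) (c + δ)) ≤
      ENNReal.ofReal (2 * (δ ^ β / β)) := by
  rw [powerMeasure_preimage hs measurableSet_Icc]
  exact (lintegral_mono_set inter_subset_right).trans
    (lintegral_Icc_abs_rpow_sub_le c hβ hδ)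

lemma powerMeasure_preimage_Ioc (hs : MeasurableSet s) (hβ : 0 < β) (hδ : 0 ≤ δ)
    (hsub : Ioc c (c + δ) ⊆ s) :
    powerMeasure s c β ((↑) ⁻¹' Ioc c (c + δ)) = ENNReal.ofReal (δ ^ β / β) := by
  rw [powerMeasure_preimage hs measurableSet_Ioc, inter_eq_right.2 hsub,
    ← lintegral_Ioc_rpow_sub c hβ hδ]
  exact setLIntegral_congr_fun measurableSet_Ioc fun z hz => by
    rw [abs_of_pos (sub_pos.2 hz.1)]

lemma isFiniteMeasure_powerMeasure (hs : MeasurableSet s) (hβ : 0 < β) (hδ : 0 ≤ δ)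
    (hbdd : s ⊆ Icc (c - δ) (c + δ)) : IsFiniteMeasure (powerMeasure s c β) := by
  have huniv : ((↑) : s → ℝ) ⁻¹' Icc (c - δ) (c + δ) = univ :=
    preimage_eq_univ_iff.2 (by simpa using hbdd)
  exact ⟨huniv ▸ (powerMeasure_preimage_Icc_le hs hβ hδ).trans_lt ENNReal.ofReal_lt_top⟩

lemma neZero_powerMeasure (hs : MeasurableSet s) (hβ : 0 < β) (hδ : 0 < δ)
    (hsub : Ioc c (c + δ) ⊆ s) : NeZero (powerMeasure s c β) := by
  refine ⟨fun h => ?_⟩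
  have := powerMeasure_preimage_Ioc hs hβ hδ.le hsub
  rw [h, Measure.coe_zero, Pi.zero_apply, eq_comm, ENNReal.ofReal_eq_zero] at this
  exact (by positivity : 0 < δ ^ β / β).not_ge this

variable {f : s → ℝ}

lemma weakAvgSlope_powerMeasure_step_le (hs : MeasurableSet s) (hβ : 0 < β)
    (hf : ∀ z, f z = if c < (z : ℝ) then 1 else 0) :
    weakAvgSlope (powerMeasure s c β) β f ≤ ENNReal.ofReal (2 / β) := by
  refine iSup₂_le fun t ht => ?_
  set r := t ^ (-β)⁻¹
  have hr : 0 < r := Real.rpow_pos_of_pos ht _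
  have hlevel :
      {x : s | ENNReal.ofReal t ≤ hslope β f x} ⊆ (↑) ⁻¹' Icc (c - r) (c + r) := by
    intro x hx
    rw [mem_preimage, ← Real.closedBall_eq_Icc, Metric.mem_closedBall, Real.dist_eq]
    by_cases hxc : (x : ℝ) = c
    · simpa [hxc] using hr.le
    have hxc' : 0 < |(x : ℝ) - c| := abs_pos.2 (sub_ne_zero.2 hxc)
    exact (Real.le_rpow_inv_iff_of_neg hxc' ht (neg_neg_of_pos hβ)).2
      ((ENNReal.ofReal_le_ofReal_iff (by positivity)).1
        (hx.trans (hslope_step_le hβ.le hf hxc)))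
  have hrβ : r ^ β = t⁻¹ := by
    rw [← Real.rpow_mul ht.le, inv_neg, neg_mul, inv_mul_cancel₀ hβ.ne', Real.rpow_neg_one]
  calc ENNReal.ofReal t * powerMeasure s c β {x | ENNReal.ofReal t ≤ hslope β f x}
      ≤ ENNReal.ofReal t * ENNReal.ofReal (2 * (r ^ β / β)) := by
        gcongr
        exact (measure_mono hlevel).trans (powerMeasure_preimage_Icc_le hs hβ hr.le)
    _ = ENNReal.ofReal (2 / β) := by
        rw [← ENNReal.ofReal_mul ht.le, hrβ]
        congr 1
        field_simp

lemma avgSlope_powerMeasure_step_eq_top (hs : MeasurableSet s) (hc : c ∈ s) (hδ : 0 < δ)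
    (hsub : Ioc c (c + δ) ⊆ s) (hf : ∀ z, f z = if c < (z : ℝ) then 1 else 0) :
    avgSlope (powerMeasure s c β) β f = ⊤ := by
  refine top_unique ?_
  calc ⊤ = ∫⁻ z in s ∩ Ioc c (c + δ),
        ENNReal.ofReal (|z - c| ^ (β - 1)) * ENNReal.ofReal ((z - c) ^ (-β)) := by
        rw [inter_eq_right.2 hsub, ← lintegral_Ioc_inv_sub_eq_top c hδ]
        refine setLIntegral_congr_fun measurableSet_Ioc fun z hz => ?_
        have hz : 0 < z - c := sub_pos.2 hz.1
        rw [abs_of_pos hz, ← ENNReal.ofReal_mul (by positivity), ← Real.rpow_add hz,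
          show β - 1 + -β = -1 by ring, Real.rpow_neg_one]
    _ = ∫⁻ x in (↑) ⁻¹' Ioc c (c + δ), ENNReal.ofReal (((x : ℝ) - c) ^ (-β))
          ∂powerMeasure s c β :=
        (setLIntegral_preimage_comap_withDensity hs measurableSet_Ioc (by fun_prop)
          (by fun_prop)).symm
    _ ≤ ∫⁻ x in (↑) ⁻¹' Ioc c (c + δ), hslope β f x ∂powerMeasure s c β :=
        setLIntegral_mono' (measurable_subtype_coe measurableSet_Ioc) fun x hx =>
          le_hslope_step hc hf hx.1
    _ ≤ avgSlope (powerMeasure s c β) β f := setLIntegral_le_lintegral _ _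

lemma weakAvgSlope_one_powerMeasure_step_eq_top (hs : MeasurableSet s) (hβ0 : 0 < β)
    (hβ1 : β < 1) (hc : c ∈ s) (hδ : 0 < δ) (hsub : Ioc c (c + δ) ⊆ s)
    (hf : ∀ z, f z = if c < (z : ℝ) then 1 else 0) :
    weakAvgSlope (powerMeasure s c β) 1 f = ⊤ := by
  have hlevel : ∀ t, δ⁻¹ ≤ t → ENNReal.ofReal (t ^ (1 - β) / β) ≤
      ENNReal.ofReal t * powerMeasure s c β {x | ENNReal.ofReal t ≤ hslope 1 f x} := by
    intro t hδt
    have ht : 0 < t := (inv_pos.2 hδ).trans_le hδt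
    have hsub' : Ioc c (c + t⁻¹) ⊆ s :=
      (Ioc_subset_Ioc_right (add_le_add_right (inv_le_of_inv_le₀ hδ hδt) c)).trans hsub
    have hmem :
        (↑) ⁻¹' Ioc c (c + t⁻¹) ⊆ {x : s | ENNReal.ofReal t ≤ hslope 1 f x} := by
      intro x hx
      refine le_trans (ENNReal.ofReal_le_ofReal ?_) (le_hslope_step hc hf hx.1)
      rw [Real.rpow_neg_one]
      exact le_inv_of_le_inv₀ (sub_pos.2 hx.1) (by linarith [hx.2])
    calc ENNReal.ofReal (t ^ (1 - β) / β)
        = ENNReal.ofReal t * ENNReal.ofReal (t⁻¹ ^ β / β) := by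
          rw [← ENNReal.ofReal_mul ht.le, Real.inv_rpow ht.le, Real.rpow_sub ht, Real.rpow_one]
          ring_nf
      _ ≤ _ := by
          rw [← powerMeasure_preimage_Ioc hs hβ0 (by positivity) hsub']
          gcongr
  refine ENNReal.eq_top_of_forall_nnreal_le fun M => ?_
  obtain ⟨t, hMt, hδt⟩ := (((tendsto_rpow_atTop (sub_pos.2 hβ1)).eventually_ge_atTop
    (M * β)).and (eventually_ge_atTop δ⁻¹)).exists
  calc (M : ℝ≥0∞) = ENNReal.ofReal (M * β / β) := by
        rw [mul_div_cancel_right₀ _ hβ0.ne', ENNReal.ofReal_coe_nnreal]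
    _ ≤ ENNReal.ofReal (t ^ (1 - β) / β) := by gcongr
    _ ≤ _ := hlevel t hδt
    _ ≤ weakAvgSlope (powerMeasure s c β) 1 f :=
        le_iSup₂ (f := fun t (_ : 0 < t) => ENNReal.ofReal t *
          powerMeasure s c β {x | ENNReal.ofReal t ≤ hslope 1 f x}) t
          ((inv_pos.2 hδ).trans_le hδt)

end PowerMeasure

/-- Claim: a function that is weakly-average-β-Hölder but neither
strongly-average-β-Hölder nor weakly-average-Lipschitz. -/
theorem weak_avg_holder_not_avg_holder_not_weak_lip
    (β : ℝ) (hβ0 : 0 < β) (hβ1 : β < 1)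
    (f : (Set.Icc (0:ℝ) 1) → ℝ)
    (hfdef : ∀ z, f z = if 1 / 2 < (z : ℝ) then 1 else 0)
    (ν : Measure (Set.Icc (0:ℝ) 1))
    (hν : ν = ((volume : Measure ℝ).comap Subtype.val).withDensity
      fun z => ENNReal.ofReal (|(z : ℝ) - 1 / 2| ^ (β - 1)))
    (μ : Measure (Set.Icc (0:ℝ) 1)) (hμ : μ = (ν Set.univ)⁻¹ • ν) :
    IsProbabilityMeasure μ ∧
    weakAvgSlope μ β f ≠ ⊤ ∧
    avgSlope μ β f = ⊤ ∧
    weakAvgSlope μ 1 f = ⊤ := by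
  change ν = powerMeasure (Icc 0 1) (1 / 2) β at hν
  subst hμ hν
  have hsub : Ioc (1 / 2 : ℝ) (1 / 2 + 1 / 2) ⊆ Icc 0 1 :=
    fun z hz => ⟨by linarith [hz.1], by linarith [hz.2]⟩
  have hhalf : (1 / 2 : ℝ) ∈ Icc 0 1 := by norm_num
  have : IsFiniteMeasure (powerMeasure (Icc 0 1) (1 / 2) β) :=
    isFiniteMeasure_powerMeasure measurableSet_Icc hβ0 (δ := 1 / 2) (by norm_num)
      (Icc_subset_Icc (by norm_num) (by norm_num))
  have : NeZero (powerMeasure (Icc 0 1) (1 / 2) β) :=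
    neZero_powerMeasure measurableSet_Icc hβ0 (by norm_num) hsub
  have hscale : (powerMeasure (Icc 0 1) (1 / 2) β univ)⁻¹ ≠ 0 :=
    ENNReal.inv_ne_zero.2 (measure_ne_top _ _)
  refine ⟨inferInstance, ?_, ?_, ?_⟩
  · rw [weakAvgSlope_smul]
    exact ENNReal.mul_ne_top (ENNReal.inv_ne_top.2 (Measure.measure_univ_ne_zero.2 (NeZero.ne _)))
      (ne_top_of_le_ne_top ENNReal.ofReal_ne_top
        (weakAvgSlope_powerMeasure_step_le measurableSet_Icc hβ0 hfdef))
  · rw [avgSlope_smul, avgSlope_powerMeasure_step_eq_top measurableSet_Icc hhalf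
      (by norm_num) hsub hfdef, ENNReal.mul_top hscale]
  · rw [weakAvgSlope_smul, weakAvgSlope_one_powerMeasure_step_eq_top measurableSet_Icc hβ0 hβ1
      hhalf (by norm_num) hsub hfdef, ENNReal.mul_top hscale]
end
end

section
/- Let (Ω,ρ) be a metric space, β ∈ (0,1], A ⊆ Ω a nonempty finite set, and f: Ω → [0,1] such that f(u) ≠ f(v) for some u,v ∈ A. Let x ∈ Ω∖A, let (u*,v*) ∈ A×A be a maximizer of R_x(u,v) := (f(v)−f(u))/(ρ(x,v)^β+ρ(x,u)^β) over A×A, and define F: A ∪ {x} → [0,1] by F = f on A and F(x) := f(u*) + R_x(u*,v*)·ρ(x,u*)^β. Then Λ_F^β(x, A) ≤ Λ_f^β(x, A), where for a function g and a set B, Λ_g^β(x,B) := sup_{y ∈ B, y ≠ x} |g(x) − g(y)| / ρ(x,y)^β. -/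
open MeasureTheory Set Metric
open scoped ENNReal NNReal

noncomputable section

/-- The restricted `β`-slope of `g` at `x` over the set `B`. -/
def hslopeOn {Ω : Type*} [MetricSpace Ω] (β : ℝ) (g : Ω → ℝ) (x : Ω) (B : Set Ω) : ℝ≥0∞ :=
  ⨆ (y : Ω) (_ : y ∈ B) (_ : y ≠ x), ENNReal.ofReal (|g x - g y| / dist x y ^ β)

/-- `R_x(u,v) = (f v − f u) / (ρ(x,v)^β + ρ(x,u)^β)`. -/
def pmseR {Ω : Type*} [MetricSpace Ω] (β : ℝ) (f : Ω → ℝ) (x u v : Ω) : ℝ :=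
  (f v - f u) / (dist x v ^ β + dist x u ^ β)

/-- Claim I: the one-point PMSE extension has restricted slope at the
new point no larger than that of any extension. -/
theorem pmse_claim_one
    {Ω : Type*} [MetricSpace Ω] (β : ℝ) (hβ0 : 0 < β) (hβ1 : β ≤ 1)
    (A : Finset Ω) (hA : A.Nonempty)
    (f : Ω → ℝ) (hf : ∀ y, f y ∈ Icc (0:ℝ) 1)
    (hne : ∃ u ∈ A, ∃ v ∈ A, f u ≠ f v)
    (x : Ω) (hx : x ∉ A)
    (ustar vstar : Ω) (hu : ustar ∈ A) (hv : vstar ∈ A)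
    (hmax : ∀ u ∈ A, ∀ v ∈ A, pmseR β f x u v ≤ pmseR β f x ustar vstar)
    (F : Ω → ℝ)
    (hFA : ∀ a ∈ A, F a = f a)
    (hFx : F x = f ustar + pmseR β f x ustar vstar * dist x ustar ^ β) :
    hslopeOn β F x (A : Set Ω) ≤ hslopeOn β f x (A : Set Ω) := by
  classical
  have hxv : x ≠ vstar := fun h => hx (h ▸ hv)
  have hxu : x ≠ ustar := fun h => hx (h ▸ hu)
  set R := pmseR β f x ustar vstar with hR
  have hdpos : ∀ a ∈ A, 0 < dist x a ^ β := fun a ha =>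
    Real.rpow_pos_of_pos (dist_pos.mpr (fun h => hx (by rw [h]; exact ha))) β
  have hdu := hdpos ustar hu
  have hdv := hdpos vstar hv
  obtain ⟨a0, ha0⟩ := hA
  have hR0 : 0 ≤ R := by
    have := hmax a0 ha0 a0 ha0
    simpa [pmseR] using this
  have hkey : f vstar - f ustar = R * (dist x vstar ^ β + dist x ustar ^ β) := by
    rw [hR]
    unfold pmseR
    field_simp
  have hbound : ∀ a ∈ A, |F x - f a| ≤ R * dist x a ^ β := by
    intro a ha
    have hda := hdpos a ha
    have h1 : f vstar - f a ≤ R * dist x vstar ^ β + R * dist x a ^ β := by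
      have h := hmax a ha vstar hv
      unfold pmseR at h
      have := (div_le_iff₀ (by positivity)).mp h
      linarith [this, mul_add R (dist x vstar ^ β) (dist x a ^ β)]
    have h2 : f a - f ustar ≤ R * dist x a ^ β + R * dist x ustar ^ β := by
      have h := hmax ustar hu a ha
      unfold pmseR at h
      have := (div_le_iff₀ (by positivity)).mp h
      linarith [this, mul_add R (dist x a ^ β) (dist x ustar ^ β)]
    rw [abs_le]
    constructor
    · -- -(R * da) ≤ F x - f a
      rw [hFx]
      linarith
    · -- F x - f a ≤ R * da
      rw [hFx]
      linarith
  set Mv := |f x - f vstar| / dist x vstar ^ β with hMv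
  set Mu := |f x - f ustar| / dist x ustar ^ β with hMu
  have h1 : |f x - f vstar| ≤ max Mv Mu * dist x vstar ^ β := by
    have : |f x - f vstar| = Mv * dist x vstar ^ β := by
      rw [hMv]; field_simp
    rw [this]
    exact mul_le_mul_of_nonneg_right (le_max_left _ _) hdv.le
  have h2 : |f x - f ustar| ≤ max Mv Mu * dist x ustar ^ β := by
    have : |f x - f ustar| = Mu * dist x ustar ^ β := by
      rw [hMu]; field_simp
    rw [this]
    exact mul_le_mul_of_nonneg_right (le_max_right _ _) hdu.le
  have h3 : f vstar - f ustar ≤ |f x - f vstar| + |f x - f ustar| := by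
    have a1 : f vstar - f x ≤ |f x - f vstar| := by
      rw [abs_sub_comm]; exact le_abs_self _
    have a2 : f x - f ustar ≤ |f x - f ustar| := le_abs_self _
    linarith
  have hRM : R ≤ max Mv Mu := by
    rw [hR]
    unfold pmseR
    rw [div_le_iff₀ (by positivity)]
    have := mul_add (max Mv Mu) (dist x vstar ^ β) (dist x ustar ^ β)
    linarith
  have hLHS : hslopeOn β F x (A : Set Ω) ≤ ENNReal.ofReal R := by
    unfold hslopeOn
    refine iSup_le fun y => iSup_le fun hy => iSup_le fun hyx => ?_
    apply ENNReal.ofReal_le_ofReal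
    have hy' : y ∈ A := hy
    rw [hFA y hy']
    exact (div_le_iff₀ (hdpos y hy')).mpr (hbound y hy')
  have hv' : ENNReal.ofReal Mv ≤ hslopeOn β f x (A : Set Ω) := by
    unfold hslopeOn
    exact le_iSup_of_le vstar (le_iSup_of_le (Finset.mem_coe.mpr hv)
      (le_iSup_of_le hxv.symm le_rfl))
  have hu' : ENNReal.ofReal Mu ≤ hslopeOn β f x (A : Set Ω) := by
    unfold hslopeOn
    exact le_iSup_of_le ustar (le_iSup_of_le (Finset.mem_coe.mpr hu)
      (le_iSup_of_le hxu.symm le_rfl))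
  refine hLHS.trans ?_
  refine (ENNReal.ofReal_le_ofReal hRM).trans ?_
  rcases max_cases Mv Mu with ⟨h, _⟩ | ⟨h, _⟩ <;> rw [h] <;> assumption

end
end

section
/- Let (Ω,ρ) be a metric space, β ∈ (0,1], A ⊆ Ω a nonempty finite set, and f: Ω → [0,1] such that f(u) ≠ f(v) for some u,v ∈ A. Define F: Ω → [0,1] by F = f on A and, for each x ∈ Ω∖A, F(x) := f(u*_x) + R_x(u*_x,v*_x)·ρ(x,u*_x)^β, where (u*_x,v*_x) ∈ A×A is a maximizer of R_x(u,v) := (f(v)−f(u))/(ρ(x,v)^β+ρ(x,u)^β) over A×A. Then for every x ∈ Ω∖A one has Λ_F^β(x, Ω∖A) ≤ Λ_F^β(x, A), and in particular Λ_F^β(x, Ω) = Λ_F^β(x, A). -/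
open MeasureTheory Set Metric
open scoped ENNReal NNReal

noncomputable section

/-! The extension value `F x = f u + R_x(u,v) ρ(x,u)^β` at a maximizing pair `(u,v)` is squeezed
between `f a - R_x ρ(x,a)^β` and `f a + R_x ρ(x,a)^β` for every `a ∈ A`; this is just the
maximality of `R_x`, and it shows that the slope of `F` at `x` over `A` is exactly `R_x`,
attained at `u`. For two points `x, y ∉ A`, since `ρ^β` is again a metric for `β ≤ 1`, comparing
`F y` with `F x` through `v_y` (if `R_x ≤ R_y`) or through `u_x` (if `R_y ≤ R_x`) gives
`F y - F x ≤ min(R_x, R_y) ρ(x,y)^β`, so the slope over `Ω ∖ A` is at most `R_x` as well. -/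

lemma rpow_dist_triangle {Ω : Type*} [MetricSpace Ω] {β : ℝ} (hβ0 : 0 ≤ β) (hβ1 : β ≤ 1)
    (x y z : Ω) : dist x z ^ β ≤ dist x y ^ β + dist y z ^ β :=
  (Real.rpow_le_rpow dist_nonneg (dist_triangle x y z) hβ0).trans
    (Real.rpow_add_le_add_rpow dist_nonneg dist_nonneg hβ0 hβ1)

section Slope

variable {Ω : Type*} [MetricSpace Ω] {β : ℝ} {g : Ω → ℝ} {x : Ω} {s t : Set Ω}

lemma hslopeOn_union : hslopeOn β g x (s ∪ t) = hslopeOn β g x s ⊔ hslopeOn β g x t :=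
  iSup_union

lemma le_hslopeOn {y : Ω} (hy : y ∈ s) (hyx : y ≠ x) :
    ENNReal.ofReal (|g x - g y| / dist x y ^ β) ≤ hslopeOn β g x s :=
  le_iSup₂_of_le y hy (le_iSup_of_le hyx le_rfl)

lemma hslopeOn_le_ofReal {r : ℝ} (h : ∀ y ∈ s, y ≠ x → |g x - g y| ≤ r * dist x y ^ β) :
    hslopeOn β g x s ≤ ENNReal.ofReal r := by
  refine iSup₂_le fun y hy => iSup_le fun hyx => ENNReal.ofReal_le_ofReal ?_
  rw [div_le_iff₀ (Real.rpow_pos_of_pos (dist_pos.2 hyx.symm) β)]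
  exact h y hy hyx

end Slope

section Extension

variable {Ω : Type*} [MetricSpace Ω] {β : ℝ} {f : Ω → ℝ} {A : Set Ω} {x y u v : Ω}

def IsPmseMaximizer (β : ℝ) (f : Ω → ℝ) (A : Set Ω) (x u v : Ω) : Prop :=
  u ∈ A ∧ v ∈ A ∧ ∀ a ∈ A, ∀ b ∈ A, pmseR β f x a b ≤ pmseR β f x u v

def pmseValue (β : ℝ) (f : Ω → ℝ) (x u v : Ω) : ℝ :=
  f u + pmseR β f x u v * dist x u ^ β

lemma rpow_dist_pos_of_notMem (hx : x ∉ A) (ha : y ∈ A) : 0 < dist x y ^ β :=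
  Real.rpow_pos_of_pos (dist_pos.2 (ne_of_mem_of_not_mem ha hx).symm) β

namespace IsPmseMaximizer

lemma pmseR_nonneg (h : IsPmseMaximizer β f A x u v) : 0 ≤ pmseR β f x u v := by
  simpa [pmseR] using h.2.2 u h.1 u h.1

lemma pmseValue_eq_sub (h : IsPmseMaximizer β f A x u v) (hx : x ∉ A) :
    pmseValue β f x u v = f v - pmseR β f x u v * dist x v ^ β := by
  have hden : dist x v ^ β + dist x u ^ β ≠ 0 :=
    (add_pos (rpow_dist_pos_of_notMem hx h.2.1) (rpow_dist_pos_of_notMem hx h.1)).ne'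
  simp only [pmseValue, pmseR]
  field_simp
  ring

lemma abs_pmseValue_sub_le (h : IsPmseMaximizer β f A x u v) (hx : x ∉ A) {a : Ω}
    (ha : a ∈ A) : |pmseValue β f x u v - f a| ≤ pmseR β f x u v * dist x a ^ β := by
  have hv := h.2.2 a ha v h.2.1
  have hu := h.2.2 u h.1 a ha
  rw [pmseR, div_le_iff₀ (add_pos (rpow_dist_pos_of_notMem hx h.2.1)
    (rpow_dist_pos_of_notMem hx ha))] at hv
  rw [pmseR, div_le_iff₀ (add_pos (rpow_dist_pos_of_notMem hx ha)
    (rpow_dist_pos_of_notMem hx h.1))] at hu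
  rw [abs_sub_le_iff]
  constructor
  · rw [h.pmseValue_eq_sub hx]
    linarith
  · rw [pmseValue]
    linarith

lemma pmseValue_sub_le {u' v' : Ω} (hβ0 : 0 ≤ β) (hβ1 : β ≤ 1)
    (hxm : IsPmseMaximizer β f A x u v) (hym : IsPmseMaximizer β f A y u' v')
    (hx : x ∉ A) (hy : y ∉ A) :
    pmseValue β f y u' v' - pmseValue β f x u v ≤
      min (pmseR β f x u v) (pmseR β f y u' v') * dist x y ^ β := by
  have hRx := hxm.pmseR_nonneg
  have hRy := hym.pmseR_nonneg
  rcases le_total (pmseR β f x u v) (pmseR β f y u' v') with hR | hR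
  · -- compare through `v'`, the upper witness at `y`
    have hv' := (abs_sub_le_iff.1 (hxm.abs_pmseValue_sub_le hx hym.2.1)).2
    have htri := rpow_dist_triangle hβ0 hβ1 x y v'
    have hd := Real.rpow_nonneg (dist_nonneg (x := y) (y := v')) β
    rw [min_eq_left hR, hym.pmseValue_eq_sub hy]
    linarith [mul_le_mul_of_nonneg_left htri hRx, mul_le_mul_of_nonneg_right hR hd]
  · -- compare through `u`, the lower witness at `x`
    have hu := (abs_sub_le_iff.1 (hym.abs_pmseValue_sub_le hy hxm.1)).1
    have htri := rpow_dist_triangle hβ0 hβ1 y x u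
    have hd := Real.rpow_nonneg (dist_nonneg (x := x) (y := u)) β
    rw [dist_comm y x] at htri
    rw [min_eq_right hR]
    unfold pmseValue at hu ⊢
    linarith [mul_le_mul_of_nonneg_left htri hRy, mul_le_mul_of_nonneg_right hR hd]

lemma abs_pmseValue_sub_le_of_notMem {u' v' : Ω} (hβ0 : 0 ≤ β) (hβ1 : β ≤ 1)
    (hxm : IsPmseMaximizer β f A x u v) (hym : IsPmseMaximizer β f A y u' v')
    (hx : x ∉ A) (hy : y ∉ A) :
    |pmseValue β f x u v - pmseValue β f y u' v'| ≤ pmseR β f x u v * dist x y ^ β := by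
  have hd := Real.rpow_nonneg (dist_nonneg (x := x) (y := y)) β
  refine abs_sub_le_iff.2 ⟨?_, ?_⟩
  · calc pmseValue β f x u v - pmseValue β f y u' v'
        ≤ min (pmseR β f y u' v') (pmseR β f x u v) * dist y x ^ β :=
          hym.pmseValue_sub_le hβ0 hβ1 hxm hy hx
      _ ≤ pmseR β f x u v * dist x y ^ β := by
          rw [dist_comm]; exact mul_le_mul_of_nonneg_right (min_le_right _ _) hd
  · exact (hxm.pmseValue_sub_le hβ0 hβ1 hym hx hy).trans
      (mul_le_mul_of_nonneg_right (min_le_left _ _) hd)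

lemma hslopeOn_eq {g : Ω → ℝ} (h : IsPmseMaximizer β f A x u v) (hx : x ∉ A)
    (hgx : g x = pmseValue β f x u v) (hgA : ∀ a ∈ A, g a = f a) :
    hslopeOn β g x A = ENNReal.ofReal (pmseR β f x u v) := by
  refine le_antisymm (hslopeOn_le_ofReal fun a ha _ => ?_) ?_
  · rw [hgx, hgA a ha]
    exact h.abs_pmseValue_sub_le hx ha
  · have hdu := rpow_dist_pos_of_notMem (β := β) hx h.1
    have hslope : |g x - g u| / dist x u ^ β = pmseR β f x u v := by
      rw [hgx, hgA u h.1, pmseValue, add_sub_cancel_left,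
        abs_of_nonneg (mul_nonneg h.pmseR_nonneg hdu.le), mul_div_cancel_right₀ _ hdu.ne']
    exact hslope ▸ le_hslopeOn h.1 (ne_of_mem_of_not_mem h.1 hx)

end IsPmseMaximizer

lemma hslopeOn_compl_le {g : Ω → ℝ} {us vs : Ω → Ω} (hβ0 : 0 ≤ β) (hβ1 : β ≤ 1)
    (hm : ∀ y ∉ A, IsPmseMaximizer β f A y (us y) (vs y))
    (hg : ∀ y ∉ A, g y = pmseValue β f y (us y) (vs y)) (hx : x ∉ A) :
    hslopeOn β g x Aᶜ ≤ ENNReal.ofReal (pmseR β f x (us x) (vs x)) :=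
  hslopeOn_le_ofReal fun y hy _ => by
    rw [hg x hx, hg y hy]
    exact (hm x hx).abs_pmseValue_sub_le_of_notMem hβ0 hβ1 (hm y hy) hx hy

end Extension

theorem pmse_claim_two_general
    {Ω : Type*} [MetricSpace Ω] (β : ℝ) (hβ0 : 0 < β) (hβ1 : β ≤ 1)
    (A : Finset Ω)
    (f : Ω → ℝ)
    (ustar vstar : Ω → Ω)
    (hu : ∀ y, y ∉ A → ustar y ∈ A) (hv : ∀ y, y ∉ A → vstar y ∈ A)
    (hmax : ∀ y, y ∉ A → ∀ u ∈ A, ∀ v ∈ A, pmseR β f y u v ≤ pmseR β f y (ustar y) (vstar y))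
    (F : Ω → ℝ)
    (hFA : ∀ a ∈ A, F a = f a)
    (hFx : ∀ y, y ∉ A →
      F y = f (ustar y) + pmseR β f y (ustar y) (vstar y) * dist y (ustar y) ^ β) :
    ∀ x : Ω, x ∉ A →
      hslopeOn β F x ((A : Set Ω)ᶜ) ≤ hslopeOn β F x (A : Set Ω) ∧
      hslopeOn β F x Set.univ = hslopeOn β F x (A : Set Ω) := by
  intro x hx
  have hm : ∀ y ∉ (A : Set Ω), IsPmseMaximizer β f A y (ustar y) (vstar y) :=
    fun y hy => ⟨hu y hy, hv y hy, hmax y hy⟩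
  have hslopeA := (hm x hx).hslopeOn_eq hx (hFx x hx) hFA
  have hcompl : hslopeOn β F x (A : Set Ω)ᶜ ≤ hslopeOn β F x A :=
    hslopeA ▸ hslopeOn_compl_le hβ0.le hβ1 hm hFx hx
  refine ⟨hcompl, ?_⟩
  rw [← Set.union_compl_self (A : Set Ω), hslopeOn_union, sup_eq_left.2 hcompl]

/-- Claim II: outside `A`, the slope of the PMSE extension over
`Ω ∖ A` is controlled by its slope over `A`. -/
theorem pmse_claim_two
    {Ω : Type*} [MetricSpace Ω] (β : ℝ) (hβ0 : 0 < β) (hβ1 : β ≤ 1)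
    (A : Finset Ω) (hA : A.Nonempty)
    (f : Ω → ℝ) (hf : ∀ y, f y ∈ Icc (0:ℝ) 1)
    (hne : ∃ u ∈ A, ∃ v ∈ A, f u ≠ f v)
    (ustar vstar : Ω → Ω)
    (hu : ∀ y, y ∉ A → ustar y ∈ A) (hv : ∀ y, y ∉ A → vstar y ∈ A)
    (hmax : ∀ y, y ∉ A → ∀ u ∈ A, ∀ v ∈ A, pmseR β f y u v ≤ pmseR β f y (ustar y) (vstar y))
    (F : Ω → ℝ)
    (hFA : ∀ a ∈ A, F a = f a)
    (hFx : ∀ y, y ∉ A →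
      F y = f (ustar y) + pmseR β f y (ustar y) (vstar y) * dist y (ustar y) ^ β) :
    ∀ x : Ω, x ∉ A →
      hslopeOn β F x ((A : Set Ω)ᶜ) ≤ hslopeOn β F x (A : Set Ω) ∧
      hslopeOn β F x Set.univ = hslopeOn β F x (A : Set Ω) :=
  pmse_claim_two_general β hβ0 hβ1 A f ustar vstar hu hv hmax F hFA hFx

end
end

section
/- Let (Ω,ρ) be a metric space, β ∈ (0,1], A ⊆ Ω a nonempty finite set, and f: Ω → [0,1] such that f(u) ≠ f(v) for some u,v ∈ A. Define F: Ω → [0,1] by F = f on A and, for each y ∈ Ω∖A, F(y) := f(u*_y) + R_y(u*_y,v*_y)·ρ(y,u*_y)^β, where (u*_y,v*_y) ∈ A×A is a maximizer of R_y(u,v) := (f(v)−f(u))/(ρ(y,v)^β+ρ(y,u)^β) over A×A. Then for every x ∈ A one has Λ_F^β(x, Ω) = Λ_F^β(x, A) ≤ Λ_f^β(x, Ω). -/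
open MeasureTheory Set Metric
open scoped ENNReal NNReal

noncomputable section

/-! For `y ∉ A` with maximiser `(u, v)` and `R = R_y(u,v)`, the extension satisfies
`F v - F y = R ρ(y,v)^β` and `F y - F u = R ρ(y,u)^β`, while maximality of `R` against the pairs
`(x, v)` and `(u, x)` gives `|F y - F x| ≤ R ρ(y,x)^β`. So when `F y ≥ F x` the `β`-slope from `x`
to `y` is at most the slope from `y` on to `v`, and subadditivity
`ρ(x,v)^β ≤ ρ(x,y)^β + ρ(y,v)^β` (this is where `β ≤ 1` enters) makes the slope from `x` to `v`
at least as large; symmetrically with `u` when `F y ≤ F x`. Hence points outside `A` never raise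
the slope at a point of `A`, and on `A` the extension is `f` itself. -/

section Slope

variable {Ω : Type*} [MetricSpace Ω] {β : ℝ}

lemma rpow_dist_pos {x y : Ω} (h : x ≠ y) : 0 < dist x y ^ β :=
  Real.rpow_pos_of_pos (dist_pos.2 h) β

lemma rpow_dist_le_add (hβ0 : 0 ≤ β) (hβ1 : β ≤ 1) (x y z : Ω) :
    dist x z ^ β ≤ dist x y ^ β + dist y z ^ β :=
  (Real.rpow_le_rpow dist_nonneg (dist_triangle x y z) hβ0).trans
    (Real.rpow_add_le_add_rpow dist_nonneg dist_nonneg hβ0 hβ1)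

lemma sub_div_rpow_dist_le_of_le (hβ0 : 0 ≤ β) (hβ1 : β ≤ 1) {g : Ω → ℝ} {x y w : Ω}
    (hxy : x ≠ y) (hyw : y ≠ w) (hgxy : g x ≤ g y)
    (h : (g y - g x) / dist x y ^ β ≤ (g w - g y) / dist y w ^ β) :
    (g y - g x) / dist x y ^ β ≤ (g w - g x) / dist x w ^ β := by
  set s := (g y - g x) / dist x y ^ β
  have hs : 0 ≤ s := div_nonneg (sub_nonneg.2 hgxy) (rpow_dist_pos hxy).le
  have hsxy : s * dist x y ^ β = g y - g x := div_mul_cancel₀ _ (rpow_dist_pos hxy).ne'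
  have hsyw : s * dist y w ^ β ≤ g w - g y := (le_div_iff₀ (rpow_dist_pos hyw)).1 h
  have hsxw : s * dist x w ^ β ≤ g w - g x := calc
    s * dist x w ^ β ≤ s * (dist x y ^ β + dist y w ^ β) :=
      mul_le_mul_of_nonneg_left (rpow_dist_le_add hβ0 hβ1 x y w) hs
    _ ≤ g w - g x := by rw [mul_add]; linarith
  rcases eq_or_ne x w with rfl | hxw
  · have : s * (dist x y ^ β + dist y x ^ β) ≤ 0 := by rw [mul_add]; linarith
    have := nonpos_of_mul_nonpos_left this
      (add_pos (rpow_dist_pos hxy) (rpow_dist_pos hxy.symm))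
    simpa using this
  · exact (le_div_iff₀ (rpow_dist_pos hxw)).2 hsxw

end Slope

section Extension

variable {Ω : Type*} [MetricSpace Ω] {β : ℝ} {f : Ω → ℝ}

lemma pmseR_mul_add {y u : Ω} (v : Ω) (hyu : y ≠ u) :
    pmseR β f y u v * (dist y v ^ β + dist y u ^ β) = f v - f u := by
  have := rpow_dist_pos (β := β) hyu
  exact div_mul_cancel₀ _ (by positivity)

lemma abs_pmse_sub_le {x y u v : Ω} (hyx : y ≠ x) (hyu : y ≠ u)
    (hxv : pmseR β f y x v ≤ pmseR β f y u v) (hux : pmseR β f y u x ≤ pmseR β f y u v) :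
    |f u + pmseR β f y u v * dist y u ^ β - f x| ≤ pmseR β f y u v * dist y x ^ β := by
  set R := pmseR β f y u v
  have hdx := rpow_dist_pos (β := β) hyx
  have hdu := rpow_dist_pos (β := β) hyu
  have hR : R * (dist y v ^ β + dist y u ^ β) = f v - f u := pmseR_mul_add v hyu
  have hv : f v - f x ≤ R * (dist y v ^ β + dist y x ^ β) :=
    (div_le_iff₀ (by positivity)).1 hxv
  have hu : f x - f u ≤ R * (dist y x ^ β + dist y u ^ β) :=
    (div_le_iff₀ (by positivity)).1 hux
  rw [mul_add] at hR hv hu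
  exact abs_le.2 ⟨by linarith, by linarith⟩

lemma exists_slope_ge_of_notMem {A : Set Ω} {F : Ω → ℝ} (hβ0 : 0 ≤ β) (hβ1 : β ≤ 1)
    (hFA : ∀ a ∈ A, F a = f a) {x y u v : Ω} (hx : x ∈ A) (hy : y ∉ A) (hu : u ∈ A) (hv : v ∈ A)
    (hmax : ∀ a ∈ A, ∀ b ∈ A, pmseR β f y a b ≤ pmseR β f y u v)
    (hFy : F y = f u + pmseR β f y u v * dist y u ^ β) :
    ∃ w ∈ A, |F x - F y| / dist x y ^ β ≤ |F x - F w| / dist x w ^ β := by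
  have hyx : y ≠ x := ne_of_mem_of_not_mem hx hy |>.symm
  have hyu : y ≠ u := ne_of_mem_of_not_mem hu hy |>.symm
  have hyv : y ≠ v := ne_of_mem_of_not_mem hv hy |>.symm
  set R := pmseR β f y u v
  have habs : |F y - F x| ≤ R * dist x y ^ β := by
    rw [hFy, hFA x hx, dist_comm x y]
    exact abs_pmse_sub_le hyx hyu (hmax x hx v hv) (hmax u hu x hx)
  have hFvy : F v - F y = R * dist y v ^ β := by
    have := pmseR_mul_add (β := β) (f := f) v hyu
    rw [hFA v hv, hFy]; linarith [mul_add R (dist y v ^ β) (dist y u ^ β)]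
  have hFyu : F y - F u = R * dist y u ^ β := by rw [hFy, hFA u hu]; ring
  rcases le_total (F x) (F y) with hup | hdown
  · refine ⟨v, hv, ?_⟩
    rw [abs_sub_comm, abs_of_nonneg (sub_nonneg.2 hup)]
    refine (sub_div_rpow_dist_le_of_le hβ0 hβ1 hyx.symm hyv hup ?_).trans ?_
    · rw [hFvy, mul_div_cancel_right₀ _ (rpow_dist_pos hyv).ne',
        div_le_iff₀ (rpow_dist_pos hyx.symm)]
      exact (le_abs_self _).trans habs
    · exact div_le_div_of_nonneg_right (by rw [abs_sub_comm]; exact le_abs_self _) (by positivity)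
  · refine ⟨u, hu, ?_⟩
    rw [abs_of_nonneg (sub_nonneg.2 hdown)]
    have key := sub_div_rpow_dist_le_of_le (g := fun z => -F z) hβ0 hβ1 hyx.symm hyu
      (neg_le_neg hdown) ?_
    · simp only [sub_neg_eq_add, neg_add_eq_sub] at key
      exact key.trans (div_le_div_of_nonneg_right (le_abs_self _) (by positivity))
    · simp only [sub_neg_eq_add, neg_add_eq_sub]
      rw [hFyu, mul_div_cancel_right₀ _ (rpow_dist_pos hyu).ne',
        div_le_iff₀ (rpow_dist_pos hyx.symm)]
      exact (le_abs_self _).trans ((abs_sub_comm _ _).trans_le habs)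

end Extension

section HslopeOn

variable {Ω : Type*} [MetricSpace Ω] {β : ℝ} {g : Ω → ℝ} {x : Ω} {B : Set Ω}

lemma ofReal_le_hslopeOn {w : Ω} (hw : w ∈ B) :
    ENNReal.ofReal (|g x - g w| / dist x w ^ β) ≤ hslopeOn β g x B := by
  rcases eq_or_ne w x with rfl | hwx
  · simp
  · exact le_iSup₂_of_le w hw (le_iSup_of_le hwx le_rfl)

lemma hslopeOn_le {c : ℝ≥0∞}
    (h : ∀ y ∈ B, y ≠ x → ENNReal.ofReal (|g x - g y| / dist x y ^ β) ≤ c) :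
    hslopeOn β g x B ≤ c :=
  iSup₂_le fun y hy => iSup_le (h y hy)

lemma hslopeOn_mono {C : Set Ω} (h : B ⊆ C) : hslopeOn β g x B ≤ hslopeOn β g x C :=
  hslopeOn_le fun _ hy _ => ofReal_le_hslopeOn (h hy)

lemma hslopeOn_congr {g' : Ω → ℝ} (hx : x ∈ B) (h : EqOn g g' B) :
    hslopeOn β g x B = hslopeOn β g' x B := by
  refine iSup_congr fun y => iSup_congr fun hy => ?_
  rw [h hx, h hy]

end HslopeOn

theorem pmse_claim_three_general
    {Ω : Type*} [MetricSpace Ω] (β : ℝ) (hβ0 : 0 < β) (hβ1 : β ≤ 1)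
    (A : Finset Ω)
    (f : Ω → ℝ)
    (ustar vstar : Ω → Ω)
    (hu : ∀ y, y ∉ A → ustar y ∈ A) (hv : ∀ y, y ∉ A → vstar y ∈ A)
    (hmax : ∀ y, y ∉ A → ∀ u ∈ A, ∀ v ∈ A, pmseR β f y u v ≤ pmseR β f y (ustar y) (vstar y))
    (F : Ω → ℝ)
    (hFA : ∀ a ∈ A, F a = f a)
    (hFx : ∀ y, y ∉ A →
      F y = f (ustar y) + pmseR β f y (ustar y) (vstar y) * dist y (ustar y) ^ β) :
    ∀ x ∈ A,
      hslopeOn β F x Set.univ = hslopeOn β F x (A : Set Ω) ∧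
      hslopeOn β F x (A : Set Ω) ≤ hslopeOn β f x Set.univ := by
  intro x hx
  have hle : hslopeOn β F x univ ≤ hslopeOn β F x A := by
    refine hslopeOn_le fun y _ _ => ?_
    by_cases hy : y ∈ A
    · exact ofReal_le_hslopeOn hy
    · obtain ⟨w, hw, hslope⟩ := exists_slope_ge_of_notMem hβ0.le hβ1 hFA hx
        hy (hu y hy) (hv y hy) (hmax y hy) (hFx y hy)
      exact (ENNReal.ofReal_le_ofReal hslope).trans (ofReal_le_hslopeOn hw)
  refine ⟨hle.antisymm (hslopeOn_mono (subset_univ _)), ?_⟩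
  rw [hslopeOn_congr hx fun a ha => hFA a ha]
  exact hslopeOn_mono (subset_univ _)

/-- Claim III: on `A`, the full slope of the PMSE extension equals its
slope over `A` and is at most the slope of `f`. -/
theorem pmse_claim_three
    {Ω : Type*} [MetricSpace Ω] (β : ℝ) (hβ0 : 0 < β) (hβ1 : β ≤ 1)
    (A : Finset Ω) (hA : A.Nonempty)
    (f : Ω → ℝ) (hf : ∀ y, f y ∈ Icc (0:ℝ) 1)
    (hne : ∃ u ∈ A, ∃ v ∈ A, f u ≠ f v)
    (ustar vstar : Ω → Ω)
    (hu : ∀ y, y ∉ A → ustar y ∈ A) (hv : ∀ y, y ∉ A → vstar y ∈ A)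
    (hmax : ∀ y, y ∉ A → ∀ u ∈ A, ∀ v ∈ A, pmseR β f y u v ≤ pmseR β f y (ustar y) (vstar y))
    (F : Ω → ℝ)
    (hFA : ∀ a ∈ A, F a = f a)
    (hFx : ∀ y, y ∉ A →
      F y = f (ustar y) + pmseR β f y (ustar y) (vstar y) * dist y (ustar y) ^ β) :
    ∀ x ∈ A,
      hslopeOn β F x Set.univ = hslopeOn β F x (A : Set Ω) ∧
      hslopeOn β F x (A : Set Ω) ≤ hslopeOn β f x Set.univ :=
  pmse_claim_three_general β hβ0 hβ1 A f ustar vstar hu hv hmax F hFA hFx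

end
end

section
/- Let (Ω,ρ) be a metric space, β ∈ (0,1], A ⊆ Ω a finite set with at least two points, and f: A → [0,1] with f(u) ≠ f(v) for some u,v ∈ A. For x ∈ Ω define Λ*(x) := max_{u,v ∈ A} (f(v) − f(u)) / (ρ(x,v)^β + ρ(x,u)^β). Let E ⊆ Ω satisfy diam(E)^β ≤ (1/2)·min_{a ≠ a' ∈ A} ρ(a,a')^β. Then for all x, x' ∈ E one has Λ*(x) ≤ 2·Λ*(x'); that is, sup_{x,x' ∈ E} Λ*(x)/Λ*(x') ≤ 2. -/
open MeasureTheory Set Metric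
open scoped ENNReal NNReal

noncomputable section

lemma rpow_subadd_aux {a b p : ℝ} (ha : 0 ≤ a) (hb : 0 ≤ b) (hp0 : 0 ≤ p) (hp1 : p ≤ 1) :
    (a + b) ^ p ≤ a ^ p + b ^ p := by
  have h := NNReal.rpow_add_le_add_rpow a.toNNReal b.toNNReal hp0 hp1
  rw [← Real.toNNReal_add ha hb] at h
  have h2 := NNReal.coe_le_coe.2 h
  push_cast at h2
  rwa [Real.coe_toNNReal _ (add_nonneg ha hb), Real.coe_toNNReal _ ha,
    Real.coe_toNNReal _ hb] at h2

/-- Lemma: on a set of small diameter the pointwise minimal achievable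
β-slope varies by at most a factor of 2. -/
theorem minimal_slope_ratio
    {Ω : Type*} [MetricSpace Ω] (β : ℝ) (hβ0 : 0 < β) (hβ1 : β ≤ 1)
    (A : Finset Ω) (hA : 2 ≤ A.card)
    (f : Ω → ℝ) (hf : ∀ a ∈ A, f a ∈ Icc (0:ℝ) 1)
    (hne : ∃ u ∈ A, ∃ v ∈ A, f u ≠ f v)
    (Λ : Ω → ℝ)
    (hΛ : ∀ x, Λ x = sSup {r | ∃ u ∈ A, ∃ v ∈ A,
      r = (f v - f u) / (dist x v ^ β + dist x u ^ β)})
    (E : Set Ω) (hEbd : Bornology.IsBounded E)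
    (hE : ∀ a ∈ A, ∀ a' ∈ A, a ≠ a' → Metric.diam E ^ β ≤ (1 / 2) * dist a a' ^ β) :
    ∀ x ∈ E, ∀ x' ∈ E, Λ x ≤ 2 * Λ x' := by
  obtain ⟨a0, ha0⟩ : A.Nonempty := Finset.card_pos.mp (by omega)
  have hSfin : ∀ x : Ω, Set.Finite {r | ∃ u ∈ A, ∃ v ∈ A,
      r = (f v - f u) / (dist x v ^ β + dist x u ^ β)} := by
    intro x
    have heq : {r | ∃ u ∈ A, ∃ v ∈ A, r = (f v - f u) / (dist x v ^ β + dist x u ^ β)} =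
        (fun p : Ω × Ω => (f p.2 - f p.1) / (dist x p.2 ^ β + dist x p.1 ^ β)) ''
          (↑A ×ˢ ↑A) := by
      ext r
      simp only [Set.mem_setOf_eq, Set.mem_image, Set.mem_prod, Finset.mem_coe, Prod.exists]
      constructor
      · rintro ⟨u, hu, v, hv, rfl⟩; exact ⟨u, v, ⟨hu, hv⟩, rfl⟩
      · rintro ⟨u, v, ⟨hu, hv⟩, rfl⟩; exact ⟨u, hu, v, hv, rfl⟩
    rw [heq]
    exact (A.finite_toSet.prod A.finite_toSet).image _
  have hmem0 : ∀ x : Ω, (0 : ℝ) ∈ {r | ∃ u ∈ A, ∃ v ∈ A,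
      r = (f v - f u) / (dist x v ^ β + dist x u ^ β)} :=
    fun x => ⟨a0, ha0, a0, ha0, by simp⟩
  have hΛnonneg : ∀ x : Ω, 0 ≤ Λ x := by
    intro x
    rw [hΛ x]
    exact le_csSup (hSfin x).bddAbove (hmem0 x)
  intro x hx x' hx'
  rw [hΛ x]
  obtain ⟨u, hu, v, hv, hval⟩ :=
    Set.Nonempty.csSup_mem ⟨0, hmem0 x⟩ (hSfin x)
  rw [hval]
  by_cases hfuv : f v - f u ≤ 0
  · have hD0 : (0 : ℝ) ≤ dist x v ^ β + dist x u ^ β :=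
      add_nonneg (Real.rpow_nonneg dist_nonneg β) (Real.rpow_nonneg dist_nonneg β)
    have h1 : (f v - f u) / (dist x v ^ β + dist x u ^ β) ≤ 0 :=
      div_nonpos_iff.mpr (Or.inr ⟨hfuv, hD0⟩)
    linarith [hΛnonneg x']
  · push_neg at hfuv
    have huv : u ≠ v := by
      rintro rfl
      simp at hfuv
    have hDpos : ∀ y : Ω, 0 < dist y v ^ β + dist y u ^ β := by
      intro y
      rcases eq_or_ne y v with rfl | hyv
      · have h1 : 0 < dist y u ^ β :=
          Real.rpow_pos_of_pos (dist_pos.2 (Ne.symm huv)) β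
        simpa [dist_self, Real.zero_rpow hβ0.ne'] using h1
      · have h1 : 0 < dist y v ^ β := Real.rpow_pos_of_pos (dist_pos.2 hyv) β
        have h2 : (0 : ℝ) ≤ dist y u ^ β := Real.rpow_nonneg dist_nonneg β
        linarith
    have hkey : dist x' v ^ β + dist x' u ^ β ≤ 2 * (dist x v ^ β + dist x u ^ β) := by
      have hd : dist x' x ^ β ≤ Metric.diam E ^ β :=
        Real.rpow_le_rpow dist_nonneg (Metric.dist_le_diam_of_mem hEbd hx' hx) hβ0.le
      have hv' : dist x' v ^ β ≤ dist x' x ^ β + dist x v ^ β :=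
        calc dist x' v ^ β ≤ (dist x' x + dist x v) ^ β :=
              Real.rpow_le_rpow dist_nonneg (dist_triangle _ _ _) hβ0.le
          _ ≤ _ := rpow_subadd_aux dist_nonneg dist_nonneg hβ0.le hβ1
      have hu' : dist x' u ^ β ≤ dist x' x ^ β + dist x u ^ β :=
        calc dist x' u ^ β ≤ (dist x' x + dist x u) ^ β :=
              Real.rpow_le_rpow dist_nonneg (dist_triangle _ _ _) hβ0.le
          _ ≤ _ := rpow_subadd_aux dist_nonneg dist_nonneg hβ0.le hβ1
      have htri : dist u v ^ β ≤ dist x u ^ β + dist x v ^ β := by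
        have h1 : dist u v ≤ dist x u + dist x v := by
          have := dist_triangle u x v
          rw [dist_comm u x] at this
          linarith
        calc dist u v ^ β ≤ (dist x u + dist x v) ^ β :=
              Real.rpow_le_rpow dist_nonneg h1 hβ0.le
          _ ≤ _ := rpow_subadd_aux dist_nonneg dist_nonneg hβ0.le hβ1
      have hdiam := hE u hu v hv huv
      linarith
    have hstep : (f v - f u) / (dist x v ^ β + dist x u ^ β) ≤
        2 * ((f v - f u) / (dist x' v ^ β + dist x' u ^ β)) := by
      rw [mul_div_assoc', div_le_div_iff₀ (hDpos x) (hDpos x')]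
      nlinarith [hDpos x, hDpos x']
    have hmem : (f v - f u) / (dist x' v ^ β + dist x' u ^ β) ∈
        {r | ∃ u ∈ A, ∃ v ∈ A, r = (f v - f u) / (dist x' v ^ β + dist x' u ^ β)} :=
      ⟨u, hu, v, hv, rfl⟩
    have hle := le_csSup (hSfin x').bddAbove hmem
    rw [hΛ x']
    linarith

end
end
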